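/- arXiv:1612.02619 — 2 statements merged into one kernel-verified Lean document; each statement's English description precedes it below -/
import Mathlib

section
/- Let J : P₂(ℝ^d) → (−∞,+∞] be a proper lower semicontinuous functional that is convex along generalised geodesics (λ = 0) and has at least one global minimiser; set Ĵ = min J. Fix r₀ ∈ (Ĵ,+∞] and θ ∈ (0,1]. If J satisfies the functional Łojasiewicz inequality with constant c_f > 0 (with these r₀, θ), then J satisfies the gradient Łojasiewicz inequality with the same r₀ and θ and with constant c_g = c_f^θ: for every ρ ∈ P₂(ℝ^d) with Ĵ < J[ρ] < r₀ and every ν ∈ ∂J[ρ], c_f^θ (J[ρ] − Ĵ)^{1−θ} ≤ ‖ν‖_ρ. In particular, for convex (along generalised geodesics) J the gradient and functional Łojasiewicz inequalities are equivalent up to multiplicative constants. -/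
open MeasureTheory Filter Set
open scoped ENNReal Topology RealInnerProductSpace

noncomputable section

/-- Euclidean space ℝ^d. -/
abbrev Ed (d : ℕ) := EuclideanSpace ℝ (Fin d)

/-- `P₂(ℝ^d)`: Borel probability measures with finite second moment. -/
def P2 (d : ℕ) : Set (Measure (Ed d)) :=
  {μ | IsProbabilityMeasure μ ∧ (∫⁻ x, (‖x‖₊ : ℝ≥0∞) ^ 2 ∂μ) < ⊤}

/-- Couplings of two measures. -/
def couplings {d : ℕ} (μ ν : Measure (Ed d)) : Set (Measure (Ed d × Ed d)) :=
  {γ | γ.map Prod.fst = μ ∧ γ.map Prod.snd = ν}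

/-- Quadratic transport cost of a plan. -/
def transportCost {d : ℕ} (γ : Measure (Ed d × Ed d)) : ℝ≥0∞ :=
  ∫⁻ p, (‖p.1 - p.2‖₊ : ℝ≥0∞) ^ 2 ∂γ

/-- Squared Monge–Kantorovich distance. -/
def W2sq {d : ℕ} (μ ν : Measure (Ed d)) : ℝ≥0∞ :=
  ⨅ γ ∈ couplings μ ν, transportCost γ

/-- The Monge–Kantorovich (Wasserstein) distance `W₂`. -/
def W2 {d : ℕ} (μ ν : Measure (Ed d)) : ℝ :=
  Real.sqrt (W2sq μ ν).toReal

/-- Distance from a measure to a set of measures. -/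
def W2Set {d : ℕ} (μ : Measure (Ed d)) (S : Set (Measure (Ed d))) : ℝ :=
  sInf ((fun ν => W2 μ ν) '' S)

/-- Optimal transport plans. -/
def IsOptimalPlan {d : ℕ} (μ ν : Measure (Ed d)) (γ : Measure (Ed d × Ed d)) : Prop :=
  γ ∈ couplings μ ν ∧ transportCost γ = W2sq μ ν

/-- The set of global minimisers of `J` over `P₂(ℝ^d)`. -/
def argminSet {d : ℕ} (J : Measure (Ed d) → EReal) : Set (Measure (Ed d)) :=
  {ρ | ρ ∈ P2 d ∧ ∀ ν ∈ P2 d, J ρ ≤ J ν}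

/-- λ-convexity along generalised geodesics. -/
def LambdaConvexGG {d : ℕ} (J : Measure (Ed d) → EReal) (lam : ℝ) : Prop :=
  ∀ ρ ∈ P2 d, ∀ ν₀ ∈ P2 d, ∀ ν₁ ∈ P2 d, J ν₀ ≠ ⊤ → J ν₁ ≠ ⊤ →
    ∀ Ψ : Measure (Ed d × Ed d × Ed d),
      Ψ.map (fun p => p.1) = ρ →
      IsOptimalPlan ρ ν₀ (Ψ.map (fun p => (p.1, p.2.1))) →
      IsOptimalPlan ρ ν₁ (Ψ.map (fun p => (p.1, p.2.2))) →
      ∀ t ∈ Icc (0:ℝ) 1,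
        J (Ψ.map (fun p => (1-t) • p.2.1 + t • p.2.2)) ≤
          (((1-t) * (J ν₀).toReal + t * (J ν₁).toReal
            - (lam/2) * t * (1-t) *
              (∫⁻ p, (‖p.2.2 - p.2.1‖₊ : ℝ≥0∞) ^ 2 ∂Ψ).toReal : ℝ) : EReal)

/-- Sequential lower semicontinuity for the Monge–Kantorovich distance. -/
def LscW2 {d : ℕ} (J : Measure (Ed d) → EReal) : Prop :=
  ∀ ρ ∈ P2 d, ∀ ρs : ℕ → Measure (Ed d), (∀ n, ρs n ∈ P2 d) →
    Tendsto (fun n => W2 (ρs n) ρ) atTop (𝓝 0) →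
    J ρ ≤ liminf (fun n => J (ρs n)) atTop

/-- `J` is proper: it never takes the value −∞ and is finite somewhere on `P₂`. -/
def ProperJ {d : ℕ} (J : Measure (Ed d) → EReal) : Prop :=
  (∀ ρ, J ρ ≠ ⊥) ∧ ∃ ρ ∈ P2 d, J ρ ≠ ⊤

/-- Subdifferential of a λ-convex functional at `μ`. -/
def subdiff {d : ℕ} (J : Measure (Ed d) → EReal) (lam : ℝ) (μ : Measure (Ed d)) :
    Set (Ed d → Ed d) :=
  {γ | MemLp γ 2 μ ∧ J μ ≠ ⊤ ∧
    ∀ ν ∈ P2 d, ∃ Ψ, IsOptimalPlan μ ν Ψ ∧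
      J μ + (((∫ p, (inner ℝ (γ p.1) (p.2 - p.1) : ℝ) ∂Ψ) + (lam/2) * (W2 μ ν)^2 : ℝ) : EReal) ≤ J ν}

/-- `L²_μ` norm of a subgradient. -/
def sgNorm {d : ℕ} (γ : Ed d → Ed d) (μ : Measure (Ed d)) : ℝ :=
  (eLpNorm γ 2 μ).toReal

/-- Norm of the minimal-norm subgradient `∂⁰J[μ]`. -/
def minSgNorm {d : ℕ} (J : Measure (Ed d) → EReal) (lam : ℝ) (μ : Measure (Ed d)) : ℝ :=
  sInf ((fun γ => sgNorm γ μ) '' subdiff J lam μ)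

/-- Gradient Łojasiewicz inequality with parameters `Jhat = min J`, `r₀`, `θ`, `cg`. -/
def LojaGrad {d : ℕ} (J : Measure (Ed d) → EReal) (lam : ℝ) (Jhat : ℝ) (r₀ : EReal)
    (θ cg : ℝ) : Prop :=
  ∀ ρ ∈ P2 d, (Jhat : EReal) < J ρ → J ρ < r₀ →
    ∀ γ ∈ subdiff J lam ρ, cg * ((J ρ).toReal - Jhat) ^ (1-θ) ≤ sgNorm γ ρ

/-- Functional Łojasiewicz inequality with parameters `Jhat = min J`, `r₀`, `θ`, `cf`. -/
def LojaFun {d : ℕ} (J : Measure (Ed d) → EReal) (Jhat : ℝ) (r₀ : EReal)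
    (θ cf : ℝ) : Prop :=
  ∀ ρ ∈ P2 d, (Jhat : EReal) < J ρ → J ρ < r₀ →
    cf * W2Set ρ (argminSet J) ^ (1/θ) ≤ (J ρ).toReal - Jhat

/-- The metric derivative `|ρ'|(t)` of a curve of measures. -/
def mDeriv {d : ℕ} (ρ : ℝ → Measure (Ed d)) (t : ℝ) : ℝ :=
  limsup (fun h => W2 (ρ (t+h)) (ρ t) / |h|) (𝓝[≠] (0:ℝ))

/-- Gradient-flow trajectory of `J` starting at `ρ₀`. -/
structure IsGradientFlow {d : ℕ} (J : Measure (Ed d) → EReal) (lam : ℝ)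
    (ρ₀ : Measure (Ed d)) (ρ : ℝ → Measure (Ed d)) : Prop where
  init : ρ 0 = ρ₀
  mem : ∀ t, 0 ≤ t → ρ t ∈ P2 d
  findom : ∀ t, 0 ≤ t → J (ρ t) ≠ ⊤
  speed_loc_int : ∀ T, 0 < T → IntegrableOn (mDeriv ρ) (Icc 0 T)
  metric_bound : ∀ t s, 0 ≤ t → t ≤ s → W2 (ρ t) (ρ s) ≤ ∫ τ in t..s, mDeriv ρ τ
  vel : ∀ᵐ t ∂(volume.restrict (Ioi (0:ℝ))),
    ∃ γ ∈ subdiff J lam (ρ t), sgNorm γ (ρ t) = mDeriv ρ t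
  nonincr : ∀ t s, 0 ≤ t → t ≤ s → J (ρ s) ≤ J (ρ t)
  energy : ∀ t s, 0 ≤ t → t ≤ s →
    (J (ρ s)).toReal - (J (ρ t)).toReal = - ∫ τ in t..s, (mDeriv ρ τ)^2

open scoped Classical in
/-- Relative entropy `H(ρ|ρ*) = ∫ f log f dρ* = ∫ (f log f + 1 − f) dρ*`, `f = dρ/dρ*`. -/
def relEnt {d : ℕ} (ρ ρs : Measure (Ed d)) : ℝ≥0∞ :=
  if ρ ≪ ρs then
    ∫⁻ x, ENNReal.ofReal ((ρ.rnDeriv ρs x).toReal * Real.log ((ρ.rnDeriv ρs x).toReal)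
      + 1 - (ρ.rnDeriv ρs x).toReal) ∂ρs
  else ⊤

/-- Support of a measure. -/
def msupport {d : ℕ} (ρ : Measure (Ed d)) : Set (Ed d) :=
  {x | ∀ U : Set (Ed d), IsOpen U → x ∈ U → 0 < ρ U}

/-! For a subgradient `f` at `ρ` and a minimiser `ν`, the subgradient inequality along an optimal
plan `γ` and Cauchy–Schwarz in `L²(γ)` give `J ρ - Ĵ ≤ ‖f‖_ρ · W₂(ρ, ν)`. Hence
`W₂(ρ, Argmin J) ≥ (J ρ - Ĵ) / ‖f‖_ρ`; inserting this into the functional inequality and solving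
for `‖f‖_ρ` yields the gradient inequality with constant `c_f ^ θ`. -/

lemma eLpNorm_two_eq_lintegral_sq {α E : Type*} [MeasurableSpace α] [NormedAddCommGroup E]
    (f : α → E) (μ : Measure α) :
    eLpNorm f 2 μ = (∫⁻ x, (‖f x‖₊ : ℝ≥0∞) ^ 2 ∂μ) ^ (1 / 2 : ℝ) := by
  simp only [eLpNorm_eq_lintegral_rpow_enorm_toReal two_ne_zero ENNReal.ofNat_ne_top,
    ENNReal.toReal_ofNat, ENNReal.rpow_two, enorm_eq_nnnorm]

lemma abs_integral_inner_le_eLpNorm_mul_eLpNorm {α E : Type*} [MeasurableSpace α]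
    [NormedAddCommGroup E] [InnerProductSpace ℝ E] {μ : Measure α} {f g : α → E}
    (hf : MemLp f 2 μ) (hg : MemLp g 2 μ) :
    |∫ x, ⟪f x, g x⟫ ∂μ| ≤ (eLpNorm f 2 μ).toReal * (eLpNorm g 2 μ).toReal := by
  have hinner : ⟪hf.toLp f, hg.toLp g⟫ = ∫ x, ⟪f x, g x⟫ ∂μ := by
    rw [L2.inner_def]
    refine integral_congr_ae ?_
    filter_upwards [hf.coeFn_toLp, hg.coeFn_toLp] with x hfx hgx
    rw [hfx, hgx]
  rw [← hinner, ← Lp.norm_toLp f hf, ← Lp.norm_toLp g hg]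
  exact abs_real_inner_le_norm _ _

lemma memLp_id_of_mem_P2 {d : ℕ} {μ : Measure (Ed d)} (hμ : μ ∈ P2 d) :
    MemLp id 2 μ := by
  refine ⟨aestronglyMeasurable_id, ?_⟩
  rw [eLpNorm_two_eq_lintegral_sq]
  exact ENNReal.rpow_lt_top_of_nonneg (by norm_num) hμ.2.ne

lemma memLp_sub_of_mem_couplings {d : ℕ} {μ ν : Measure (Ed d)} (hμ : μ ∈ P2 d) (hν : ν ∈ P2 d)
    {γ : Measure (Ed d × Ed d)} (hγ : γ ∈ couplings μ ν) :
    MemLp (fun p => p.2 - p.1) 2 γ := by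
  have h₁ : MemLp Prod.fst 2 γ :=
    (hγ.1 ▸ memLp_id_of_mem_P2 hμ).comp_of_map measurable_fst.aemeasurable
  have h₂ : MemLp Prod.snd 2 γ :=
    (hγ.2 ▸ memLp_id_of_mem_P2 hν).comp_of_map measurable_snd.aemeasurable
  exact h₂.sub h₁

lemma IsOptimalPlan.W2_eq {d : ℕ} {μ ν : Measure (Ed d)} {γ : Measure (Ed d × Ed d)}
    (hγ : IsOptimalPlan μ ν γ) :
    W2 μ ν = (eLpNorm (fun p => p.2 - p.1) 2 γ).toReal := by
  simp only [W2, ← hγ.2, transportCost, eLpNorm_two_eq_lintegral_sq, ← enorm_eq_nnnorm,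
    enorm_sub_rev, ENNReal.toReal_rpow, Real.sqrt_eq_rpow]

lemma sgNorm_eq_eLpNorm_comp_fst {d : ℕ} {μ : Measure (Ed d)} {f : Ed d → Ed d}
    (hf : AEStronglyMeasurable f μ) {γ : Measure (Ed d × Ed d)} (hγ : γ.map Prod.fst = μ) :
    sgNorm f μ = (eLpNorm (fun p => f p.1) 2 γ).toReal := by
  subst hγ
  rw [sgNorm, eLpNorm_map_measure hf measurable_fst.aemeasurable]
  rfl

lemma le_add_sgNorm_mul_W2_of_mem_subdiff {d : ℕ} {J : Measure (Ed d) → EReal}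
    {ρ ν : Measure (Ed d)} (hρ : ρ ∈ P2 d) (hν : ν ∈ P2 d) {f : Ed d → Ed d}
    (hf : f ∈ subdiff J 0 ρ) :
    J ρ ≤ J ν + (sgNorm f ρ * W2 ρ ν : ℝ) := by
  obtain ⟨hf₂, -, hsub⟩ := hf
  obtain ⟨γ, hγ, hJ⟩ := hsub ν hν
  set I := ∫ p, ⟪f p.1, p.2 - p.1⟫ ∂γ
  have hfγ : MemLp (fun p => f p.1) 2 γ :=
    (hγ.1.1 ▸ hf₂).comp_of_map measurable_fst.aemeasurable
  have hCS : -I ≤ sgNorm f ρ * W2 ρ ν := by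
    rw [sgNorm_eq_eLpNorm_comp_fst hf₂.1 hγ.1.1, hγ.W2_eq]
    exact (neg_le_abs I).trans
      (abs_integral_inner_le_eLpNorm_mul_eLpNorm hfγ (memLp_sub_of_mem_couplings hρ hν hγ.1))
  simp only [zero_div, zero_mul, add_zero] at hJ
  calc J ρ = J ρ + I + (-I : ℝ) := by
        rw [add_assoc, ← EReal.coe_add, add_neg_cancel, EReal.coe_zero, add_zero]
    _ ≤ J ν + (sgNorm f ρ * W2 ρ ν : ℝ) := add_le_add hJ (EReal.coe_le_coe_iff.2 hCS)

lemma rpow_mul_rpow_one_sub_le_of_mul_div_rpow_le {E G c θ : ℝ} (hE : 0 < E) (hG : 0 < G)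
    (hc : 0 < c) (hθ : 0 < θ) (h : c * (E / G) ^ (1 / θ) ≤ E) : c ^ θ * E ^ (1 - θ) ≤ G := by
  have h₁ : ((E / G) ^ (1 / θ)) ^ θ ≤ (E / c) ^ θ :=
    Real.rpow_le_rpow (by positivity) ((le_div_iff₀' hc).2 h) hθ.le
  rw [← Real.rpow_mul (by positivity), one_div_mul_cancel hθ.ne', Real.rpow_one,
    Real.div_rpow hE.le hc.le, div_le_div_iff₀ hG (by positivity)] at h₁
  rw [Real.rpow_sub hE, Real.rpow_one, mul_div_assoc', div_le_iff₀ (by positivity)]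
  linarith

theorem functional_loja_implies_gradient_loja_general (d : ℕ) (J : Measure (Ed d) → EReal)
    (Jhat : ℝ) (hmin : ∃ ρ ∈ P2 d, J ρ = (Jhat : EReal) ∧ ∀ ν ∈ P2 d, J ρ ≤ J ν)
    (r₀ : EReal)
    (θ : ℝ) (hθ : θ ∈ Ioc (0:ℝ) 1)
    (cf : ℝ) (hcf : 0 < cf)
    (hLF : LojaFun J Jhat r₀ θ cf) :
    LojaGrad J 0 Jhat r₀ θ (cf ^ θ) := by
  intro ρ hρ hJρ hJρr₀ f hf
  have hθ₀ : 0 < θ := hθ.1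
  obtain ⟨ρ₀, hρ₀, hJρ₀, hρ₀min⟩ := hmin
  have hρ₀_argmin : ρ₀ ∈ argminSet J := ⟨hρ₀, hρ₀min⟩
  have hJ_argmin : ∀ ν ∈ argminSet J, J ν = Jhat := fun ν hν =>
    le_antisymm (hJρ₀ ▸ hν.2 ρ₀ hρ₀) (hJρ₀ ▸ hρ₀min ν hν.1)
  have hJρ_coe : J ρ = (J ρ).toReal := (EReal.coe_toReal hf.2.1 (ne_bot_of_gt hJρ)).symm
  have hE : 0 < (J ρ).toReal - Jhat :=
    sub_pos.2 (EReal.coe_lt_coe_iff.1 (hJρ_coe ▸ hJρ))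
  have hslope : ∀ ν ∈ argminSet J, (J ρ).toReal - Jhat ≤ sgNorm f ρ * W2 ρ ν := by
    intro ν hν
    have h := le_add_sgNorm_mul_W2_of_mem_subdiff hρ hν.1 hf
    rw [hJ_argmin ν hν, hJρ_coe, ← EReal.coe_add, EReal.coe_le_coe_iff] at h
    linarith
  have hG : 0 < sgNorm f ρ := by
    by_contra! hG
    have hW : 0 ≤ W2 ρ ρ₀ := Real.sqrt_nonneg _
    have := mul_nonpos_of_nonpos_of_nonneg hG hW
    linarith [hslope ρ₀ hρ₀_argmin]
  have hdist : ((J ρ).toReal - Jhat) / sgNorm f ρ ≤ W2Set ρ (argminSet J) :=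
    le_csInf (Set.Nonempty.image _ ⟨ρ₀, hρ₀_argmin⟩)
      (forall_mem_image.2 fun ν hν => (div_le_iff₀' hG).2 (hslope ν hν))
  refine rpow_mul_rpow_one_sub_le_of_mul_div_rpow_le hE hG hcf hθ₀
    (le_trans ?_ (hLF ρ hρ hJρ hJρr₀))
  gcongr

/-- for convex functionals, the functional Łojasiewicz inequality
implies the gradient Łojasiewicz inequality with `c_g = c_f^θ`. -/
theorem functional_loja_implies_gradient_loja (d : ℕ) (J : Measure (Ed d) → EReal)
    (hproper : ProperJ J) (hlsc : LscW2 J) (hconv : LambdaConvexGG J 0)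
    (Jhat : ℝ) (hmin : ∃ ρ ∈ P2 d, J ρ = (Jhat : EReal) ∧ ∀ ν ∈ P2 d, J ρ ≤ J ν)
    (r₀ : EReal) (hr₀ : (Jhat : EReal) < r₀)
    (θ : ℝ) (hθ : θ ∈ Ioc (0:ℝ) 1)
    (cf : ℝ) (hcf : 0 < cf)
    (hLF : LojaFun J Jhat r₀ θ cf) :
    LojaGrad J 0 Jhat r₀ θ (cf ^ θ) :=
  functional_loja_implies_gradient_loja_general d J Jhat hmin r₀ θ hθ cf hcf hLF
end
end

section
/- (Lifting the Łojasiewicz growth inequality from ℝ^d to P₂(ℝ^d), case θ ≤ 1/2) Let V : ℝ^d → ℝ be convex and continuous with V̂ = inf V > −∞ and S = Argmin V nonempty and compact, and define J[ρ] = ∫ V dρ on P₂(ℝ^d), so that min J = V̂ and Argmin J = {ρ ∈ P₂(ℝ^d) : supp ρ ⊆ S}. Fix r₀ ∈ (V̂, +∞] and θ ∈ (0, 1/2], c > 0. If c · dist(x, S)^{1/θ} ≤ V(x) − V̂ for every x ∈ ℝ^d with V̂ < V(x) < r₀, then for every ρ ∈ P₂(ℝ^d) with supp ρ ⊆ V^{−1}([V̂,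 r₀)) one has c · W₂(ρ, Argmin J)^{1/θ} ≤ J[ρ] − V̂. -/
/-! The nearest-point projection `p` onto the compact convex set `S = Argmin V` is `1`-Lipschitz,
so `p#ρ` is a probability measure supported in `S`, and the plan `(id, p)#ρ` shows
`W₂(ρ, p#ρ) ≤ ‖dist(·, S)‖_{L²(ρ)}`. As `1/θ ≥ 2` and `ρ` is a probability measure, this is at most
`‖dist(·, S)‖_{L^{1/θ}(ρ)}`; integrating the pointwise growth inequality, which holds `ρ`-a.e.
because `supp ρ ⊆ {V < r₀}`, gives the claim. -/

open MeasureTheory Filter Set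
open scoped ENNReal Topology RealInnerProductSpace

noncomputable section

open Metric

section NearestPoint

variable {E : Type*} [NormedAddCommGroup E] [InnerProductSpace ℝ E]

/-- The variational inequality `⟪x - p x, w - p x⟫ ≤ 0` (`w ∈ K`), used at `x` and at `y`, gives
`‖p x - p y‖² ≤ ⟪x - y, p x - p y⟫`. -/
theorem exists_lipschitzWith_one_nearestPoint {K : Set E} (hne : K.Nonempty)
    (hK : IsComplete K) (hconv : Convex ℝ K) :
    ∃ p : E → E, LipschitzWith 1 p ∧ (∀ x, p x ∈ K) ∧ ∀ x, ‖x - p x‖ = infDist x K := by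
  choose p hpK hp using exists_norm_eq_iInf_of_complete_convex hne hK hconv
  have hvar : ∀ x, ∀ w ∈ K, ⟪x - p x, w - p x⟫ ≤ 0 := fun x =>
    (norm_eq_iInf_iff_real_inner_le_zero hconv (hpK x)).1 (hp x)
  refine ⟨p, LipschitzWith.mk_one fun x y => ?_, hpK, fun x => ?_⟩
  · have hsq : ‖p x - p y‖ ^ 2 ≤ ‖x - y‖ * ‖p x - p y‖ := by
      have hx : 0 ≤ ⟪x - p x, p x - p y⟫ := by
        have := hvar x (p y) (hpK y)
        rw [← neg_sub (p x) (p y), inner_neg_right] at this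
        linarith
      have hy := hvar y (p x) (hpK x)
      have hsplit : x - y = (x - p x) - (y - p y) + (p x - p y) := by abel
      have hxy : ‖p x - p y‖ ^ 2 ≤ ⟪x - y, p x - p y⟫ := by
        rw [hsplit, inner_add_left, inner_sub_left, real_inner_self_eq_norm_sq]
        linarith
      exact hxy.trans (real_inner_le_norm _ _)
    rw [dist_eq_norm, dist_eq_norm]
    nlinarith [norm_nonneg (p x - p y), norm_nonneg (x - y)]
  · rw [hp x, infDist_eq_iInf]
    simp_rw [dist_eq_norm]

end NearestPoint

theorem ConvexOn.convex_setOf_eq_of_forall_le {E : Type*} [AddCommGroup E] [Module ℝ E]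
    {V : E → ℝ} (hV : ConvexOn ℝ univ V) {m : ℝ} (hm : ∀ x, m ≤ V x) :
    Convex ℝ {x | V x = m} := by
  have : {x | V x = m} = {x ∈ univ | V x ≤ m} := by
    ext x
    simpa using ⟨le_of_eq, fun h => le_antisymm h (hm x)⟩
  exact this ▸ hV.convex_le m

section Lp

variable {α F : Type*} {m : MeasurableSpace α} {μ : Measure α} [NormedAddCommGroup F]
  {f : α → F}

theorem lpNorm_le_lpNorm_of_exponent_le [IsProbabilityMeasure μ] {p q : ℝ≥0∞} (hpq : p ≤ q)
    (hf : MemLp f q μ) : lpNorm f p μ ≤ lpNorm f q μ := by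
  rw [← toReal_eLpNorm hf.1, ← toReal_eLpNorm hf.1]
  exact ENNReal.toReal_mono hf.eLpNorm_ne_top (eLpNorm_le_eLpNorm_of_exponent_le hpq hf.1)

theorem lpNorm_ofReal_rpow_eq_integral_norm_rpow {q : ℝ} (hq : 0 < q)
    (hf : AEStronglyMeasurable f μ) :
    lpNorm f (ENNReal.ofReal q) μ ^ q = ∫ x, ‖f x‖ ^ q ∂μ := by
  rw [lpNorm_eq_integral_norm_rpow_toReal (by simpa using hq) ENNReal.ofReal_ne_top hf,
    ENNReal.toReal_ofReal hq.le, ← Real.rpow_mul (integral_nonneg fun x => by positivity),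
    inv_mul_cancel₀ hq.ne', Real.rpow_one]

end Lp

section Wasserstein

variable {d : ℕ}

theorem ae_mem_msupport (ρ : Measure (Ed d)) : ∀ᵐ x ∂ρ, x ∈ msupport ρ := by
  have : msupport ρ = ρ.support := by
    rw [Measure.support_eq_forall_isOpen]
    ext x
    exact forall_congr' fun U => ⟨fun h hx hU => h hU hx, fun h hU hx => h hx hU⟩
  exact this ▸ Measure.support_mem_ae

theorem msupport_map_subset {ρ : Measure (Ed d)} {p : Ed d → Ed d} (hp : Measurable p)
    {S : Set (Ed d)} (hS : IsClosed S) (hpS : ∀ x, p x ∈ S) : msupport (ρ.map p) ⊆ S := by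
  intro x hx
  by_contra hxS
  have hnull : ρ.map p Sᶜ = 0 := by
    rw [Measure.map_apply hp hS.measurableSet.compl]
    simp [preimage_compl, show p ⁻¹' S = univ from eq_univ_of_forall hpS]
  exact (hx Sᶜ hS.isOpen_compl hxS).ne' hnull

theorem map_mem_P2_of_isBounded_range {ρ : Measure (Ed d)} [IsProbabilityMeasure ρ]
    {p : Ed d → Ed d} (hp : Measurable p) (hbdd : Bornology.IsBounded (range p)) :
    ρ.map p ∈ P2 d := by
  obtain ⟨R, hR⟩ := hbdd.exists_norm_le
  refine ⟨Measure.isProbabilityMeasure_map hp.aemeasurable, ?_⟩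
  rw [lintegral_map (by fun_prop) hp]
  calc ∫⁻ x, (‖p x‖₊ : ℝ≥0∞) ^ 2 ∂ρ ≤ ∫⁻ _, (‖R‖₊ : ℝ≥0∞) ^ 2 ∂ρ := by
        refine lintegral_mono fun x => ?_
        gcongr
        exact (hR _ (mem_range_self x)).trans (le_abs_self R)
    _ < ⊤ := by simp

theorem W2sq_map_le_eLpNorm_sq (ρ : Measure (Ed d)) {p : Ed d → Ed d} (hp : Measurable p) :
    W2sq ρ (ρ.map p) ≤ eLpNorm (fun x => x - p x) 2 ρ ^ 2 := by
  have hgraph : Measurable fun x => (x, p x) := measurable_id.prodMk hp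
  have hcoupling : ρ.map (fun x => (x, p x)) ∈ couplings ρ (ρ.map p) :=
    ⟨by simp [Measure.map_map measurable_fst hgraph, Function.comp_def],
      by rw [Measure.map_map measurable_snd hgraph]; rfl⟩
  refine (iInf₂_le _ hcoupling).trans_eq ?_
  rw [transportCost, lintegral_map (by fun_prop) hgraph]
  simpa [enorm_eq_nnnorm] using (eLpNorm_nnreal_pow_eq_lintegral (μ := ρ) (f := fun x => x - p x)
    (p := 2) two_ne_zero).symm

theorem W2_map_le_lpNorm (ρ : Measure (Ed d)) {p : Ed d → Ed d} (hp : Measurable p)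
    (hmem : MemLp (fun x => x - p x) 2 ρ) : W2 ρ (ρ.map p) ≤ lpNorm (fun x => x - p x) 2 ρ := by
  rw [W2, ← toReal_eLpNorm hmem.1]
  refine Real.sqrt_le_iff.2 ⟨ENNReal.toReal_nonneg, ?_⟩
  rw [← ENNReal.toReal_pow]
  exact ENNReal.toReal_mono (ENNReal.pow_ne_top hmem.eLpNorm_ne_top) (W2sq_map_le_eLpNorm_sq ρ hp)

theorem W2Set_le_W2 (ρ : Measure (Ed d)) {T : Set (Measure (Ed d))} {ν : Measure (Ed d)}
    (hν : ν ∈ T) : W2Set ρ T ≤ W2 ρ ν :=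
  csInf_le ⟨0, by rintro _ ⟨_, _, rfl⟩; exact Real.sqrt_nonneg _⟩ ⟨ν, hν, rfl⟩

theorem W2Set_nonneg (ρ : Measure (Ed d)) (T : Set (Measure (Ed d))) : 0 ≤ W2Set ρ T :=
  Real.sInf_nonneg <| by rintro _ ⟨_, _, rfl⟩; exact Real.sqrt_nonneg _

theorem W2Set_rpow_le_integral_infDist_rpow {S : Set (Ed d)} (hne : S.Nonempty)
    (hcp : IsCompact S) (hconv : Convex ℝ S) (ρ : Measure (Ed d)) [IsProbabilityMeasure ρ]
    {q : ℝ} (hq : 2 ≤ q) (hint : Integrable (fun x => infDist x S ^ q) ρ) :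
    W2Set ρ {ρ' | ρ' ∈ P2 d ∧ msupport ρ' ⊆ S} ^ q ≤ ∫ x, infDist x S ^ q ∂ρ := by
  obtain ⟨p, hp_lip, hpS, hp_dist⟩ :=
    exists_lipschitzWith_one_nearestPoint hne hcp.isComplete hconv
  have hp : Measurable p := hp_lip.continuous.measurable
  have hmem : MemLp (fun x => x - p x) (ENNReal.ofReal q) ρ := by
    refine (integrable_norm_rpow_iff (by fun_prop) (by simp; linarith) ENNReal.ofReal_ne_top).1 ?_
    simpa [ENNReal.toReal_ofReal (by linarith : (0:ℝ) ≤ q), hp_dist] using hint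
  have hq2 : (2 : ℝ≥0∞) ≤ ENNReal.ofReal q := by simpa using ENNReal.ofReal_le_ofReal hq
  have hν : ρ.map p ∈ {ρ' | ρ' ∈ P2 d ∧ msupport ρ' ⊆ S} :=
    ⟨map_mem_P2_of_isBounded_range hp (hcp.isBounded.subset (range_subset_iff.2 hpS)),
      msupport_map_subset hp hcp.isClosed hpS⟩
  calc W2Set ρ {ρ' | ρ' ∈ P2 d ∧ msupport ρ' ⊆ S} ^ q ≤ W2 ρ (ρ.map p) ^ q := by
        gcongr
        exacts [W2Set_nonneg _ _, W2Set_le_W2 ρ hν]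
    _ ≤ lpNorm (fun x => x - p x) 2 ρ ^ q := by
        gcongr
        exacts [Real.sqrt_nonneg _, W2_map_le_lpNorm ρ hp (hmem.mono_exponent hq2)]
    _ ≤ lpNorm (fun x => x - p x) (ENNReal.ofReal q) ρ ^ q := by
        gcongr
        exacts [lpNorm_nonneg, lpNorm_le_lpNorm_of_exponent_le hq2 hmem]
    _ = ∫ x, infDist x S ^ q ∂ρ := by
        simp [lpNorm_ofReal_rpow_eq_integral_norm_rpow (by linarith) hmem.1, hp_dist]

end Wasserstein

theorem pointwise_growth_lifts_small_theta_general (d : ℕ) (V : Ed d → ℝ)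
    (hVconv : ConvexOn ℝ univ V)
    (Vhat : ℝ) (hVhat : IsGLB (range V) Vhat)
    (S : Set (Ed d)) (hS : S = {x | V x = Vhat}) (hSne : S.Nonempty) (hScp : IsCompact S)
    (r₀ : EReal)
    (c θ : ℝ) (hc : 0 < c) (hθ : θ ∈ Ioc (0:ℝ) (1/2))
    (hyp : ∀ x : Ed d, Vhat < V x → ((V x : ℝ) : EReal) < r₀ →
      c * Metric.infDist x S ^ (1/θ) ≤ V x - Vhat) :
    ∀ ρ ∈ P2 d, Integrable V ρ →
      msupport ρ ⊆ {x | ((V x : ℝ) : EReal) < r₀} →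
      c * W2Set ρ {ρ' | ρ' ∈ P2 d ∧ msupport ρ' ⊆ S} ^ (1/θ) ≤ (∫ x, V x ∂ρ) - Vhat := by
  rintro ρ ⟨hρ, -⟩ hVint hsupp
  have hVhat_le : ∀ x, Vhat ≤ V x := fun x => hVhat.1 ⟨x, rfl⟩
  have hq : 2 ≤ 1 / θ := by rw [le_div_iff₀ hθ.1]; linarith [hθ.2]
  have hgrowth : ∀ᵐ x ∂ρ, c * infDist x S ^ (1 / θ) ≤ V x - Vhat := by
    filter_upwards [ae_mem_msupport ρ] with x hx
    rcases (hVhat_le x).eq_or_lt with heq | hlt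
    · have hxS : x ∈ S := hS ▸ heq.symm
      rw [infDist_zero_of_mem hxS, Real.zero_rpow (by linarith), mul_zero, ← heq, sub_self]
    · exact hyp x hlt (hsupp hx)
  have hgap : Integrable (fun x => V x - Vhat) ρ := hVint.sub (integrable_const Vhat)
  have hint : Integrable (fun x => infDist x S ^ (1 / θ)) ρ := by
    have hcont : Continuous fun x => infDist x S ^ (1 / θ) :=
      (continuous_infDist_pt S).rpow_const fun _ => Or.inr (by linarith)
    refine (hgap.div_const c).mono' hcont.aestronglyMeasurable ?_
    filter_upwards [hgrowth] with x hx
    rw [Real.norm_of_nonneg (Real.rpow_nonneg infDist_nonneg _), le_div_iff₀ hc, mul_comm]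
    exact hx
  have hSconv : Convex ℝ S := hS ▸ hVconv.convex_setOf_eq_of_forall_le hVhat_le
  calc c * W2Set ρ {ρ' | ρ' ∈ P2 d ∧ msupport ρ' ⊆ S} ^ (1 / θ)
      ≤ c * ∫ x, infDist x S ^ (1 / θ) ∂ρ := by
        gcongr
        exact W2Set_rpow_le_integral_infDist_rpow hSne hScp hSconv ρ hq hint
    _ = ∫ x, c * infDist x S ^ (1 / θ) ∂ρ := (integral_const_mul c _).symm
    _ ≤ ∫ x, (V x - Vhat) ∂ρ := integral_mono_ae (hint.const_mul c) hgap hgrowth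
    _ = (∫ x, V x ∂ρ) - Vhat := by simp [integral_sub hVint (integrable_const Vhat)]

/-- lifting the Łojasiewicz growth inequality from `ℝ^d` to
`P₂(ℝ^d)` for potential energies, case `θ ∈ (0,1/2]` (same constant, same
exponent). -/
theorem pointwise_growth_lifts_small_theta (d : ℕ) (V : Ed d → ℝ)
    (hVconv : ConvexOn ℝ univ V) (hVcont : Continuous V)
    (Vhat : ℝ) (hVhat : IsGLB (range V) Vhat)
    (S : Set (Ed d)) (hS : S = {x | V x = Vhat}) (hSne : S.Nonempty) (hScp : IsCompact S)
    (r₀ : EReal) (hr₀ : (Vhat : EReal) < r₀)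
    (c θ : ℝ) (hc : 0 < c) (hθ : θ ∈ Ioc (0:ℝ) (1/2))
    (hyp : ∀ x : Ed d, Vhat < V x → ((V x : ℝ) : EReal) < r₀ →
      c * Metric.infDist x S ^ (1/θ) ≤ V x - Vhat) :
    ∀ ρ ∈ P2 d, Integrable V ρ →
      msupport ρ ⊆ {x | ((V x : ℝ) : EReal) < r₀} →
      c * W2Set ρ {ρ' | ρ' ∈ P2 d ∧ msupport ρ' ⊆ S} ^ (1/θ) ≤ (∫ x, V x ∂ρ) - Vhat :=
  pointwise_growth_lifts_small_theta_general d V hVconv Vhat hVhat S hS hSne hScp r₀ c θ hc hθ hyp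
end
end
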